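/- For every n ≥ 1 and every k ≥ 0, the rock-breaking chain started at the one-part partition (n) fails to be absorbed at 1^n after k steps with probability at most C(n,2)/2^k; that is, 1 − P_n^k((n), 1^n) ≤ C(n,2)/2^k. -/

import Mathlib

open scoped Classical

/-- One step of the rock-breaking chain: each part of `lam` is broken by an independent
symmetric binomial split, and empty pieces are discarded. -/
noncomputable def rockP (n : ℕ) (lam mu : Nat.Partition n) : ℚ :=
  ((2 : ℚ) ^ n)⁻¹ *
    ∑ s : ((j : Fin lam.parts.toList.length) → Fin (lam.parts.toList.get j + 1)),
      if ((↑(List.ofFn fun j => (s j : ℕ)) +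
            ↑(List.ofFn fun j => lam.parts.toList.get j - (s j : ℕ)) : Multiset ℕ).filter
            (fun x => x ≠ 0)) = mu.parts
      then ∏ j, ((lam.parts.toList.get j).choose (s j) : ℚ)
      else 0

/-- The rock-breaking transition matrix on partitions of `n`. -/
noncomputable def rockMatrix (n : ℕ) : Matrix (Nat.Partition n) (Nat.Partition n) ℚ :=
  Matrix.of fun lam mu => rockP n lam mu

/-- The partition `1^n` of `n` into `n` ones. -/
def onesPartition (n : ℕ) : Nat.Partition n :=
  ⟨Multiset.replicate n 1, by
    intro i hi
    rw [Multiset.eq_of_mem_replicate hi]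
    exact Nat.one_pos, by simp⟩

/-!
Let `pairCount μ = ∑ C(μᵢ, 2)` count the pairs of unit masses lying in a common part. When a part
of size `m` is split binomially, each of its pairs stays together with probability `1/2`, so
`pairCount` is an eigenvector of the chain with eigenvalue `1/2`, and its expectation after `k`
steps from `(n)` is `C(n,2)/2^k`. As `pairCount` vanishes at `1^n` and is at least `1` elsewhere,
Markov's inequality bounds the probability of not being at `1^n` by that expectation.
-/

open Finset
open scoped Matrix

namespace Nat

theorem sum_range_choose_mul_choose_two (m : ℕ) :
    ∑ a ∈ range (m + 1), m.choose a * a.choose 2 = m.choose 2 * 2 ^ (m - 2) := by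
  obtain _ | _ | m := m
  · rfl
  · rfl
  rw [sum_range_succ', sum_range_succ']
  have hterm : ∀ b ∈ range (m + 1),
      (m + 2).choose (b + 2) * (b + 2).choose 2 = (m + 2).choose 2 * m.choose b := by
    intro b _
    rw [choose_mul (by omega : 2 ≤ b + 2)]
    simp
  simp [sum_congr rfl hterm, ← mul_sum, sum_range_choose]

theorem two_mul_sum_range_choose_mul_choose_two_add (m : ℕ) :
    2 * ∑ a ∈ range (m + 1), m.choose a * (a.choose 2 + (m - a).choose 2) =
      2 ^ m * m.choose 2 := by
  have hflip : ∑ a ∈ range (m + 1), m.choose a * (m - a).choose 2 =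
      ∑ a ∈ range (m + 1), m.choose a * a.choose 2 := by
    rw [← sum_flip]
    refine sum_congr rfl fun a ha => ?_
    rw [choose_symm (mem_range_succ_iff.mp ha), Nat.sub_sub_self (mem_range_succ_iff.mp ha)]
  simp only [mul_add, sum_add_distrib, hflip, sum_range_choose_mul_choose_two]
  obtain _ | _ | m := m
  · rfl
  · rfl
  rw [show m + 2 - 2 = m by omega, pow_add]
  ring

end Nat

def binomialWeight (m a : ℕ) : ℚ :=
  m.choose a / 2 ^ m

theorem sum_binomialWeight (m : ℕ) : ∑ a : Fin (m + 1), binomialWeight m a = 1 := by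
  simp only [binomialWeight]
  rw [← sum_div, Fin.sum_univ_eq_sum_range (fun a => (m.choose a : ℚ)), ← Nat.cast_sum,
    Nat.sum_range_choose]
  simp

theorem sum_binomialWeight_mul_choose_two_add (m : ℕ) :
    ∑ a : Fin (m + 1), binomialWeight m a * ((a : ℕ).choose 2 + (m - a).choose 2 : ℚ) =
      m.choose 2 / 2 := by
  have h : (2 : ℚ) * ∑ a ∈ range (m + 1), (m.choose a : ℚ) * (a.choose 2 + (m - a).choose 2)
      = 2 ^ m * m.choose 2 := by
    exact_mod_cast Nat.two_mul_sum_range_choose_mul_choose_two_add m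
  rw [Fin.sum_univ_eq_sum_range
    (fun a => binomialWeight m a * ((a.choose 2 : ℚ) + ((m - a).choose 2 : ℚ)))]
  simp only [binomialWeight, div_mul_eq_mul_div, ← sum_div]
  field_simp
  linarith

theorem Fintype.sum_prod_mul_sum_of_sum_eq_one {ι R : Type*} [Fintype ι] [DecidableEq ι]
    [CommSemiring R] {κ : ι → Type*} [∀ i, Fintype (κ i)] (p g : ∀ i, κ i → R)
    (hp : ∀ i, ∑ a, p i a = 1) :
    ∑ x : ∀ i, κ i, (∏ i, p i (x i)) * ∑ i, g i (x i) = ∑ i, ∑ a, p i a * g i a := by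
  simp only [mul_sum]
  rw [sum_comm]
  refine Fintype.sum_congr _ _ fun i => ?_
  have hfactor : ∀ x : ∀ i, κ i, (∏ j, p j (x j)) * g i (x i) =
      ∏ j, p j (x j) * if j = i then g j (x j) else 1 := by
    intro x
    rw [prod_mul_distrib, Finset.prod_ite_eq' univ i (fun j => g j (x j))]
    simp
  simp only [hfactor]
  rw [← Fintype.prod_sum (fun j a => p j a * if j = i then g j a else 1)]
  rw [Fintype.prod_eq_single i fun j hj => by simp [hj, hp]]
  simp

theorem Multiset.sum_map_filter_ne_zero {α M : Type*} [Zero α] [DecidableEq α] [AddCommMonoid M]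
    (g : α → M) (hg : g 0 = 0) (A : Multiset α) :
    ((A.filter (· ≠ 0)).map g).sum = (A.map g).sum := by
  induction A using Multiset.induction_on with
  | empty => simp
  | cons a A ih => by_cases h : a = 0 <;> simp [h, hg, ih]

theorem Nat.Partition.sum_toList_get {n : ℕ} (lam : Nat.Partition n) :
    ∑ j, lam.parts.toList.get j = n := by
  simp [lam.parts_sum]

noncomputable def pairCount {n : ℕ} (mu : Nat.Partition n) : ℚ :=
  (mu.parts.map fun x => (x.choose 2 : ℚ)).sum

theorem pairCount_eq_sum_toList_get {n : ℕ} (lam : Nat.Partition n) :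
    pairCount lam = ∑ j, ((lam.parts.toList.get j).choose 2 : ℚ) := by
  rw [pairCount]
  conv_lhs => rw [← Multiset.coe_toList lam.parts]
  rw [Multiset.map_coe, Multiset.sum_coe, ← Fin.sum_univ_fun_getElem]
  rfl

abbrev RockSplit {n : ℕ} (lam : Nat.Partition n) : Type :=
  (j : Fin lam.parts.toList.length) → Fin (lam.parts.toList.get j + 1)

namespace RockSplit

variable {n : ℕ} {lam : Nat.Partition n} (s : RockSplit lam)

noncomputable def pieces : Multiset ℕ :=
  ((↑(List.ofFn fun j => (s j : ℕ)) +
      ↑(List.ofFn fun j => lam.parts.toList.get j - (s j : ℕ)) : Multiset ℕ).filter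
    (fun x => x ≠ 0))

theorem sum_map_pieces {M : Type*} [AddCommMonoid M] (g : ℕ → M) (hg : g 0 = 0) :
    (s.pieces.map g).sum = ∑ j, (g (s j) + g (lam.parts.toList.get j - s j)) := by
  rw [pieces, Multiset.sum_map_filter_ne_zero g hg]
  simp only [Multiset.map_add, Multiset.sum_add, Multiset.map_coe, Multiset.sum_coe,
    List.map_ofFn, List.sum_ofFn, sum_add_distrib, Function.comp_apply]

theorem sum_pieces : s.pieces.sum = n := by
  have h := s.sum_map_pieces id rfl
  simp only [id, Multiset.map_id'] at h
  rw [h]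
  refine (sum_congr rfl fun j _ => ?_).trans lam.sum_toList_get
  exact Nat.add_sub_cancel' (Nat.lt_succ_iff.mp (s j).is_lt)

noncomputable def toPartition : Nat.Partition n where
  parts := s.pieces
  parts_pos hi := Nat.pos_of_ne_zero (Multiset.mem_filter.mp hi).2
  parts_sum := s.sum_pieces

noncomputable def weight : ℚ :=
  ∏ j, binomialWeight (lam.parts.toList.get j) (s j)

theorem weight_eq :
    s.weight = ((2 : ℚ) ^ n)⁻¹ * ∏ j, ((lam.parts.toList.get j).choose (s j) : ℚ) := by
  simp only [weight, binomialWeight]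
  rw [prod_div_distrib, prod_pow_eq_pow_sum, lam.sum_toList_get, div_eq_inv_mul]

theorem pairCount_toPartition :
    pairCount s.toPartition =
      ∑ j, (((s j : ℕ).choose 2 : ℚ) + ((lam.parts.toList.get j - s j).choose 2 : ℚ)) :=
  s.sum_map_pieces (fun x => (x.choose 2 : ℚ)) (by simp)

variable (lam) in
theorem sum_weight : ∑ s : RockSplit lam, s.weight = 1 := by
  simp only [weight]
  rw [← Fintype.prod_sum fun j (a : Fin (lam.parts.toList.get j + 1)) =>
    binomialWeight (lam.parts.toList.get j) a]
  simp only [sum_binomialWeight, prod_const_one]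

variable (lam) in
theorem sum_weight_mul_pairCount :
    ∑ s : RockSplit lam, s.weight * pairCount s.toPartition = pairCount lam / 2 := by
  simp only [weight, pairCount_toPartition]
  rw [Fintype.sum_prod_mul_sum_of_sum_eq_one
      (fun j (a : Fin (lam.parts.toList.get j + 1)) => binomialWeight (lam.parts.toList.get j) a)
      (fun j a => ((a : ℕ).choose 2 : ℚ) + ((lam.parts.toList.get j - a).choose 2 : ℚ))
      fun j => sum_binomialWeight _,
    pairCount_eq_sum_toList_get, sum_div]
  exact sum_congr rfl fun j _ => sum_binomialWeight_mul_choose_two_add _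

end RockSplit

theorem rockP_eq_sum_ite {n : ℕ} (lam mu : Nat.Partition n) :
    rockP n lam mu = ∑ s : RockSplit lam, if s.toPartition = mu then s.weight else 0 := by
  rw [rockP, mul_sum]
  refine sum_congr rfl fun (s : RockSplit lam) _ => ?_
  have hcond : s.pieces = mu.parts ↔ s.toPartition = mu :=
    ⟨fun h => Nat.Partition.ext h, by rintro rfl; rfl⟩
  change ((2 : ℚ) ^ n)⁻¹ * (if s.pieces = mu.parts then _ else 0) = _
  simp only [hcond, mul_ite, mul_zero, s.weight_eq]

theorem sum_rockP_mul {n : ℕ} (lam : Nat.Partition n) (w : Nat.Partition n → ℚ) :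
    ∑ mu, rockP n lam mu * w mu = ∑ s : RockSplit lam, s.weight * w s.toPartition := by
  simp only [rockP_eq_sum_ite, sum_mul, ite_mul, zero_mul]
  rw [sum_comm]
  simp

theorem rockP_nonneg {n : ℕ} (lam mu : Nat.Partition n) : 0 ≤ rockP n lam mu := by
  rw [rockP_eq_sum_ite]
  refine sum_nonneg fun s _ => ?_
  split_ifs
  · exact prod_nonneg fun j _ => by unfold binomialWeight; positivity
  · rfl

theorem rockMatrix_mulVec_one (n : ℕ) : rockMatrix n *ᵥ 1 = 1 := by
  funext lam
  simpa [Matrix.mulVec, dotProduct, rockMatrix, RockSplit.sum_weight] using sum_rockP_mul lam 1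

theorem rockMatrix_mem_rowStochastic (n : ℕ) :
    rockMatrix n ∈ Matrix.rowStochastic ℚ (Nat.Partition n) :=
  ⟨rockP_nonneg, rockMatrix_mulVec_one n⟩

theorem rockMatrix_mulVec_pairCount (n : ℕ) :
    rockMatrix n *ᵥ pairCount = (2⁻¹ : ℚ) • pairCount := by
  funext lam
  rw [Pi.smul_apply, smul_eq_mul, inv_mul_eq_div, ← RockSplit.sum_weight_mul_pairCount]
  exact sum_rockP_mul lam pairCount

theorem pairCount_indiscrete (n : ℕ) : pairCount (Nat.Partition.indiscrete n) = n.choose 2 := by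
  rcases eq_or_ne n 0 with rfl | hn
  · simp [pairCount]
  · simp [pairCount, hn]

theorem pairCount_onesPartition (n : ℕ) : pairCount (onesPartition n) = 0 := by
  simp [pairCount, onesPartition]

theorem eq_onesPartition_of_forall_eq_one {n : ℕ} (mu : Nat.Partition n)
    (h : ∀ x ∈ mu.parts, x = 1) : mu = onesPartition n := by
  have hrep : mu.parts = Multiset.replicate (Multiset.card mu.parts) 1 :=
    Multiset.eq_replicate.mpr ⟨rfl, h⟩
  have hcard : Multiset.card mu.parts = n := by
    simpa using (congrArg Multiset.sum hrep).symm.trans mu.parts_sum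
  exact Nat.Partition.ext (hrep.trans (by rw [hcard]; rfl))

theorem one_le_pairCount {n : ℕ} {mu : Nat.Partition n} (h : mu ≠ onesPartition n) :
    1 ≤ pairCount mu := by
  obtain ⟨x, hx, hx1⟩ : ∃ x ∈ mu.parts, x ≠ 1 := by
    by_contra! hall
    exact h (eq_onesPartition_of_forall_eq_one mu hall)
  have hx2 : 2 ≤ x := by have := mu.parts_pos hx; omega
  calc (1 : ℚ) ≤ x.choose 2 := by exact_mod_cast Nat.choose_pos hx2
    _ ≤ pairCount mu :=
      Multiset.single_le_sum
        (fun _ hy => by obtain ⟨y, -, rfl⟩ := Multiset.mem_map.mp hy; positivity) _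
        (Multiset.mem_map_of_mem _ hx)

namespace Matrix

variable {ι R : Type*} [Fintype ι] [DecidableEq ι]

theorem pow_mulVec_of_mulVec_eq_smul [CommSemiring R] {M : Matrix ι ι R} {v : ι → R} {c : R}
    (h : M *ᵥ v = c • v) (k : ℕ) : M ^ k *ᵥ v = c ^ k • v := by
  induction k with
  | zero => simp
  | succ k ih => rw [pow_succ', ← mulVec_mulVec, ih, mulVec_smul, h, smul_smul, pow_succ]

theorem one_sub_le_mulVec_of_mem_rowStochastic [Ring R] [PartialOrder R] [IsOrderedRing R]
    {M : Matrix ι ι R} (hM : M ∈ rowStochastic R ι) {f : ι → R} (i a : ι) (hfa : 0 ≤ f a)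
    (hf : ∀ j ≠ a, 1 ≤ f j) : 1 - M i a ≤ (M *ᵥ f) i := by
  have hrow := sum_row_of_mem_rowStochastic hM i
  rw [← add_sum_erase _ _ (mem_univ a)] at hrow
  rw [← hrow, add_sub_cancel_left, mulVec, dotProduct, ← add_sum_erase _ _ (mem_univ a)]
  exact le_add_of_nonneg_of_le (mul_nonneg (hM.1 i a) hfa)
    (sum_le_sum fun j hj => le_mul_of_one_le_right (hM.1 i j) (hf j (ne_of_mem_erase hj)))

end Matrix

theorem rockBreaking_absorption_bound_general (n : ℕ) (k : ℕ) :
    1 - (rockMatrix n ^ k) (Nat.Partition.indiscrete n) (onesPartition n) ≤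
      (n.choose 2 : ℚ) / 2 ^ k := by
  calc 1 - (rockMatrix n ^ k) (Nat.Partition.indiscrete n) (onesPartition n)
      ≤ (rockMatrix n ^ k *ᵥ pairCount) (Nat.Partition.indiscrete n) :=
        Matrix.one_sub_le_mulVec_of_mem_rowStochastic
          (pow_mem (rockMatrix_mem_rowStochastic n) k) _ _
          (pairCount_onesPartition n).ge fun _ => one_le_pairCount
    _ = (n.choose 2 : ℚ) / 2 ^ k := by
      rw [Matrix.pow_mulVec_of_mulVec_eq_smul (rockMatrix_mulVec_pairCount n), Pi.smul_apply,
        pairCount_indiscrete, smul_eq_mul, inv_pow, inv_mul_eq_div]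

/-- After `k` steps from the one-part partition `(n)`, the rock-breaking chain fails to
be absorbed at `1^n` with probability at most `C(n,2)/2^k`. -/
theorem rockBreaking_absorption_bound (n : ℕ) (hn : 1 ≤ n) (k : ℕ) :
    1 - (rockMatrix n ^ k) (Nat.Partition.indiscrete n) (onesPartition n) ≤
      (n.choose 2 : ℚ) / 2 ^ k :=
  rockBreaking_absorption_bound_general n k
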